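/- If Γ is a connected admissible graph, then χ(Γ) ≤ 1. Moreover χ(Γ) = 1 if and only if every path P of Γ has the following property: every connected component C of Γ∖P has exactly one vertex in common with P and satisfies χ(C) = 1. Furthermore, if some single path of Γ has this property, then already χ(Γ) = 1. -/

import Mathlib

noncomputable section

open Filter Topology

/-- A finite, directed, edge-colored graph with colors in `Fin s`,
with vertices living in an ambient type `V`. -/
structure CGraph (V : Type) (s : ℕ) where
  verts : Set V
  finite : verts.Finite
  nonem : verts.Nonempty
  E : Fin s → V → V → Prop
  memL : ∀ r a b, E r a b → a ∈ verts
  memR : ∀ r a b, E r a b → b ∈ verts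

namespace CGraph

variable {V W : Type} {s : ℕ}

/-- A graph is trivial iff it has no edges (of any color). -/
def Trivial (Γ : CGraph V s) : Prop := ∀ r a b, ¬ Γ.E r a b

/-- Two vertices are adjacent iff there is an edge (of any color, either direction)
between them. -/
def Adj (Γ : CGraph V s) (a b : V) : Prop := ∃ r, Γ.E r a b ∨ Γ.E r b a

/-- A graph is connected iff any two of its vertices are joined by a finite chain of
edges (of any colors and either direction). -/
def Connected (Γ : CGraph V s) : Prop :=
  ∀ a ∈ Γ.verts, ∀ b ∈ Γ.verts, Relation.ReflTransGen Γ.Adj a b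

/-- `Γ'` is a subgraph of `Γ`. -/
def Subgraph (Γ' Γ : CGraph V s) : Prop :=
  Γ'.verts ⊆ Γ.verts ∧ ∀ r a b, Γ'.E r a b → Γ.E r a b

/-- `C` is a connected component of `Γ`: a maximal connected subgraph. -/
def IsComponent (C Γ : CGraph V s) : Prop :=
  C.Subgraph Γ ∧ C.Connected ∧
    ∀ C' : CGraph V s, C'.Subgraph Γ → C'.Connected → C.Subgraph C' → C'.Subgraph C

/-- A graph is admissible iff no two distinct edges of the same color begin at the
same vertex or end at the same vertex. -/
def Admissible (Γ : CGraph V s) : Prop :=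
  (∀ r a b b', Γ.E r a b → Γ.E r a b' → b = b') ∧
    (∀ r a a' b, Γ.E r a b → Γ.E r a' b → a = a')

/-- `Γ.mono r` is `Γ` with all edges not of color `r` removed. -/
def mono (Γ : CGraph V s) (r : Fin s) : CGraph V s where
  verts := Γ.verts
  finite := Γ.finite
  nonem := Γ.nonem
  E := fun r' a b => r' = r ∧ Γ.E r' a b
  memL := fun r' a b h => Γ.memL r' a b h.2
  memR := fun r' a b h => Γ.memR r' a b h.2

/-- An `r`-path of `Γ` is a non-trivial connected component of `Γ.mono r`. -/
def IsRPath (P Γ : CGraph V s) (r : Fin s) : Prop :=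
  P.IsComponent (Γ.mono r) ∧ ¬ P.Trivial

/-- A path of `Γ` is an `r`-path for some color `r`. -/
def IsPathOf (P Γ : CGraph V s) : Prop := ∃ r, P.IsRPath Γ r

/-- A path is closed (a closed circuit) iff every one of its vertices has an
outgoing edge. -/
def Closed (P : CGraph V s) : Prop := ∀ a ∈ P.verts, ∃ r b, P.E r a b

/-- A loop of `Γ` is a path of `Γ` which is a closed circuit. -/
def IsLoopOf (P Γ : CGraph V s) : Prop := P.IsPathOf Γ ∧ P.Closed

/-- A string of `Γ` is a path of `Γ` which is not a loop. -/
def IsStringOf (P Γ : CGraph V s) : Prop := P.IsPathOf Γ ∧ ¬ P.Closed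

/-- The number of edges of `Γ` (counting colors). -/
def edgeCount (Γ : CGraph V s) : ℕ :=
  Nat.card {p : Fin s × V × V // Γ.E p.1 p.2.1 p.2.2}

/-- The number of loops (of any color) of `Γ`. -/
def loopCount (Γ : CGraph V s) : ℕ :=
  Nat.card {P : CGraph V s // P.IsLoopOf Γ}

/-- The number of vertices of `Γ`. -/
def vertCount (Γ : CGraph V s) : ℕ := Nat.card Γ.verts

/-- The loop-characteristic `χ(Γ) = V(Γ) - E(Γ) + L(Γ)`. -/
def chi (Γ : CGraph V s) : ℤ :=
  (Γ.vertCount : ℤ) - (Γ.edgeCount : ℤ) + (Γ.loopCount : ℤ)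

/-- `Γ.erase P` is the graph obtained from `Γ` by removing all edges of `P`. -/
def erase (Γ P : CGraph V s) : CGraph V s where
  verts := Γ.verts
  finite := Γ.finite
  nonem := Γ.nonem
  E := fun r a b => Γ.E r a b ∧ ¬ P.E r a b
  memL := fun r a b h => Γ.memL r a b h.1
  memR := fun r a b h => Γ.memR r a b h.1

/-- A graph is strongly admissible (w.r.t. `d : Fin s → ℕ∞`) iff it is admissible,
every `r`-loop has length `d r`, and every `r`-string has length `< d r`. -/
def StronglyAdmissible (d : Fin s → ℕ∞) (Γ : CGraph V s) : Prop :=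
  Γ.Admissible ∧ ∀ r P, IsRPath P Γ r →
    (P.Closed → (P.edgeCount : ℕ∞) = d r) ∧ (¬ P.Closed → (P.edgeCount : ℕ∞) < d r)

/-- The quotient of `Γ` by a partition (setoid) `π` of the ambient vertex type. -/
def quot (Γ : CGraph V s) (π : Setoid V) : CGraph (Quotient π) s where
  verts := Quotient.mk π '' Γ.verts
  finite := Γ.finite.image _
  nonem := Γ.nonem.image _
  E := fun r A B => ∃ a b, Γ.E r a b ∧ Quotient.mk π a = A ∧ Quotient.mk π b = B
  memL := fun r A B h => by
    obtain ⟨a, b, he, ha, hb⟩ := h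
    exact ⟨a, Γ.memL r a b he, ha⟩
  memR := fun r A B h => by
    obtain ⟨a, b, he, ha, hb⟩ := h
    exact ⟨b, Γ.memR r a b he, hb⟩

/-- `π` is a congruence of `Γ`: for any two edges of the same color, the source
blocks agree iff the target blocks agree. -/
def IsCongruence (Γ : CGraph V s) (π : Setoid V) : Prop :=
  ∀ r a₁ b₁ a₂ b₂, Γ.E r a₁ b₁ → Γ.E r a₂ b₂ → (π.r a₁ a₂ ↔ π.r b₁ b₂)

/-- `π` is a strong congruence of `Γ`: a congruence whose quotient is strongly
admissible. -/
def IsStrongCongruence (d : Fin s → ℕ∞) (Γ : CGraph V s) (π : Setoid V) : Prop :=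
  Γ.IsCongruence π ∧ (Γ.quot π).StronglyAdmissible d

/-- Isomorphism of edge-colored graphs: a bijection between the vertex sets
preserving the `r`-edges in both directions, for every color `r`. -/
def Iso (Γ₁ : CGraph V s) (Γ₂ : CGraph W s) : Prop :=
  ∃ Φ : V → W, Set.BijOn Φ Γ₁.verts Γ₂.verts ∧
    ∀ r a b, a ∈ Γ₁.verts → b ∈ Γ₁.verts → (Γ₂.E r (Φ a) (Φ b) ↔ Γ₁.E r a b)

end CGraph

/-!
Fix an `r`-path `P` of `Γ` and split `Γ` into `P` and the components `C` of `Γ ∖ P`. Vertices and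
edges of `Γ ∖ P` are counted component by component; `P` itself, being a connected graph in which
every vertex has at most one outgoing and one incoming edge, has `V(P) - 1` edges if it is a string
and `V(P)` edges if it is a loop; and the loops of `Γ` are those of the components together with
`P` when `P` is closed. Altogether `χ(Γ) = 1 + ∑_C (χ(C) - |C ∩ P|)`. Connectedness of `Γ` makes
every `C` meet `P`, and `χ(C) ≤ 1` by induction on the number of edges, so every summand is `≤ 0`,
with equality for all `C` exactly when each `C` meets `P` once and has `χ(C) = 1`.
-/

namespace CGraph

variable {V : Type} {s : ℕ}

@[ext]
lemma ext {Γ₁ Γ₂ : CGraph V s} (hv : Γ₁.verts = Γ₂.verts)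
    (hE : ∀ r a b, Γ₁.E r a b ↔ Γ₂.E r a b) : Γ₁ = Γ₂ := by
  cases Γ₁; cases Γ₂
  simp only [mk.injEq]
  exact ⟨hv, funext fun r => funext fun a => funext fun b => propext (hE r a b)⟩

def edgeSet (Γ : CGraph V s) : Set (Fin s × V × V) := {p | Γ.E p.1 p.2.1 p.2.2}

lemma finite_edgeSet (Γ : CGraph V s) : Γ.edgeSet.Finite :=
  (Set.finite_univ.prod (Γ.finite.prod Γ.finite)).subset fun _ hp =>
    ⟨trivial, Γ.memL _ _ _ hp, Γ.memR _ _ _ hp⟩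

lemma edgeCount_eq_ncard (Γ : CGraph V s) : Γ.edgeCount = Γ.edgeSet.ncard :=
  Nat.card_coe_set_eq Γ.edgeSet

lemma vertCount_eq_ncard (Γ : CGraph V s) : Γ.vertCount = Γ.verts.ncard :=
  Nat.card_coe_set_eq Γ.verts

lemma edgeCount_le_of_le {Γ₁ Γ₂ : CGraph V s} (h : ∀ r a b, Γ₁.E r a b → Γ₂.E r a b) :
    Γ₁.edgeCount ≤ Γ₂.edgeCount := by
  rw [edgeCount_eq_ncard, edgeCount_eq_ncard]
  exact Set.ncard_le_ncard (fun p hp => h p.1 p.2.1 p.2.2 hp) Γ₂.finite_edgeSet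

lemma edgeCount_pos_iff {Γ : CGraph V s} : 0 < Γ.edgeCount ↔ ¬ Γ.Trivial := by
  simp only [edgeCount_eq_ncard, Set.ncard_pos Γ.finite_edgeSet, Trivial, not_forall, not_not]
  exact ⟨fun ⟨p, hp⟩ => ⟨p.1, p.2.1, p.2.2, hp⟩, fun ⟨r, a, b, h⟩ => ⟨(r, a, b), h⟩⟩

lemma Adj.symm {Γ : CGraph V s} {a b : V} (h : Γ.Adj a b) : Γ.Adj b a := by
  obtain ⟨r, h⟩ := h
  exact ⟨r, h.symm⟩

lemma Adj.mem_right {Γ : CGraph V s} {a b : V} (h : Γ.Adj a b) : b ∈ Γ.verts := by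
  obtain ⟨r, h | h⟩ := h
  exacts [Γ.memR r a b h, Γ.memL r b a h]

lemma reflTransGen_adj_symm {Γ : CGraph V s} {a b : V}
    (h : Relation.ReflTransGen Γ.Adj a b) : Relation.ReflTransGen Γ.Adj b a :=
  have : Std.Symm Γ.Adj := ⟨fun _ _ => Adj.symm⟩
  Std.Symm.symm _ _ h

lemma Trivial.reflTransGen_adj {Γ : CGraph V s} (htriv : Γ.Trivial) {a b : V}
    (h : Relation.ReflTransGen Γ.Adj a b) : a = b := by
  induction h with
  | refl => rfl
  | tail _ hadj ih =>
    obtain ⟨r, h | h⟩ := hadj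
    all_goals exact absurd h (htriv _ _ _)

namespace Subgraph

lemma trans {Γ₁ Γ₂ Γ₃ : CGraph V s} (h₁ : Γ₁.Subgraph Γ₂) (h₂ : Γ₂.Subgraph Γ₃) :
    Γ₁.Subgraph Γ₃ :=
  ⟨h₁.1.trans h₂.1, fun r a b h => h₂.2 r a b (h₁.2 r a b h)⟩

lemma antisymm {Γ₁ Γ₂ : CGraph V s} (h₁ : Γ₁.Subgraph Γ₂) (h₂ : Γ₂.Subgraph Γ₁) : Γ₁ = Γ₂ :=
  ext (h₁.1.antisymm h₂.1) fun r a b => ⟨h₁.2 r a b, h₂.2 r a b⟩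

lemma adj {Γ₁ Γ₂ : CGraph V s} (h : Γ₁.Subgraph Γ₂) {a b : V} (hab : Γ₁.Adj a b) :
    Γ₂.Adj a b := by
  obtain ⟨r, hab⟩ := hab
  exact ⟨r, hab.imp (h.2 r a b) (h.2 r b a)⟩

lemma reflTransGen_adj {Γ₁ Γ₂ : CGraph V s} (h : Γ₁.Subgraph Γ₂) {a b : V}
    (hab : Relation.ReflTransGen Γ₁.Adj a b) : Relation.ReflTransGen Γ₂.Adj a b :=
  Relation.ReflTransGen.mono (fun _ _ => h.adj) _ _ hab

end Subgraph

lemma mono_subgraph (Γ : CGraph V s) (r : Fin s) : (Γ.mono r).Subgraph Γ :=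
  ⟨subset_rfl, fun _ _ _ h => h.2⟩

lemma finite_setOf_subgraph (Γ : CGraph V s) : {Δ : CGraph V s | Δ.Subgraph Γ}.Finite := by
  have hinj : Set.InjOn (fun Δ : CGraph V s => (Δ.verts, Δ.edgeSet)) {Δ | Δ.Subgraph Γ} := by
    intro Δ₁ _ Δ₂ _ h
    simp only [Prod.mk.injEq] at h
    exact ext h.1 fun r a b => Set.ext_iff.mp h.2 (r, a, b)
  refine Set.Finite.of_finite_image ?_ hinj
  refine (Γ.finite.finite_subsets.prod Γ.finite_edgeSet.finite_subsets).subset ?_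
  rintro _ ⟨Δ, hΔ, rfl⟩
  exact ⟨hΔ.1, fun p hp => hΔ.2 p.1 p.2.1 p.2.2 hp⟩

lemma admissible_of_le {Γ₁ Γ₂ : CGraph V s} (hadm : Γ₂.Admissible)
    (h : ∀ r a b, Γ₁.E r a b → Γ₂.E r a b) : Γ₁.Admissible :=
  ⟨fun r a b b' h₁ h₂ => hadm.1 r a b b' (h r a b h₁) (h r a b' h₂),
   fun r a a' b h₁ h₂ => hadm.2 r a a' b (h r a b h₁) (h r a' b h₂)⟩

lemma erase_subgraph (Γ P : CGraph V s) : (Γ.erase P).Subgraph Γ :=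
  ⟨subset_rfl, fun _ _ _ h => h.1⟩

lemma mem_of_reflTransGen {Γ : CGraph V s} {S : Set V}
    (hS : ∀ a b, a ∈ S → Γ.Adj a b → b ∈ S) {a b : V} (ha : a ∈ S)
    (h : Relation.ReflTransGen Γ.Adj a b) : b ∈ S := by
  induction h with
  | refl => exact ha
  | tail _ hbc ih => exact hS _ _ ih hbc

section Components

variable {Γ C Q : CGraph V s}

lemma isComponent_of_forall_edge (hsub : Q.Subgraph Γ) (hconn : Q.Connected)
    (hedge : ∀ r a b, Γ.E r a b → a ∈ Q.verts ∨ b ∈ Q.verts → Q.E r a b) :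
    Q.IsComponent Γ := by
  refine ⟨hsub, hconn, fun C hC hCconn hQC => ?_⟩
  obtain ⟨q, hq⟩ := Q.nonem
  have hverts : C.verts ⊆ Q.verts := by
    refine fun w hw => mem_of_reflTransGen (fun a b ha hab => ?_) hq
      (hCconn q (hQC.1 hq) w hw)
    obtain ⟨r, h | h⟩ := hC.adj hab
    · exact Q.memR _ _ _ (hedge _ _ _ h (Or.inl ha))
    · exact Q.memL _ _ _ (hedge _ _ _ h (Or.inr ha))
  exact ⟨hverts, fun r a b h => hedge r a b (hC.2 r a b h) (Or.inl (hverts (C.memL r a b h)))⟩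

def compOf (Γ : CGraph V s) (v : V) (hv : v ∈ Γ.verts) : CGraph V s where
  verts := {w ∈ Γ.verts | Relation.ReflTransGen Γ.Adj v w}
  finite := Γ.finite.subset (Set.sep_subset _ _)
  nonem := ⟨v, hv, .refl⟩
  E := fun r a b => Γ.E r a b ∧ Relation.ReflTransGen Γ.Adj v a
  memL := fun r a b h => ⟨Γ.memL r a b h.1, h.2⟩
  memR := fun r a b h => ⟨Γ.memR r a b h.1, h.2.tail ⟨r, .inl h.1⟩⟩

lemma compOf_edge {v : V} {hv : v ∈ Γ.verts} {r : Fin s} {a b : V} (h : Γ.E r a b)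
    (hab : a ∈ (Γ.compOf v hv).verts ∨ b ∈ (Γ.compOf v hv).verts) :
    (Γ.compOf v hv).E r a b := by
  rcases hab with ⟨-, ha⟩ | ⟨-, hb⟩
  exacts [⟨h, ha⟩, ⟨h, hb.tail ⟨r, .inr h⟩⟩]

lemma reflTransGen_adj_compOf {v : V} {hv : v ∈ Γ.verts} {a b : V}
    (ha : Relation.ReflTransGen Γ.Adj v a) (hab : Relation.ReflTransGen Γ.Adj a b) :
    Relation.ReflTransGen (Γ.compOf v hv).Adj a b := by
  induction hab with
  | refl => exact .refl
  | @tail c d hac hcd ih =>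
    obtain ⟨r, h | h⟩ := hcd
    · exact ih.tail ⟨r, .inl ⟨h, ha.trans hac⟩⟩
    · exact ih.tail ⟨r, .inr (compOf_edge h (.inr ⟨Γ.memR r d c h, ha.trans hac⟩))⟩

lemma isComponent_compOf (Γ : CGraph V s) (v : V) (hv : v ∈ Γ.verts) :
    (Γ.compOf v hv).IsComponent Γ := by
  refine isComponent_of_forall_edge ⟨Set.sep_subset _ _, fun _ _ _ h => h.1⟩ ?_
    fun _ _ _ => compOf_edge
  rintro a ⟨-, hva⟩ b ⟨-, hvb⟩
  exact (reflTransGen_adj_symm (reflTransGen_adj_compOf .refl hva)).trans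
    (reflTransGen_adj_compOf .refl hvb)

lemma IsComponent.eq_compOf (hC : C.IsComponent Γ) {v : V} (hv : v ∈ C.verts) :
    C = Γ.compOf v (hC.1.1 hv) := by
  have hreach : ∀ w ∈ C.verts, Relation.ReflTransGen Γ.Adj v w :=
    fun w hw => hC.1.reflTransGen_adj (hC.2.1 v hv w hw)
  have hsub : C.Subgraph (Γ.compOf v (hC.1.1 hv)) :=
    ⟨fun w hw => ⟨hC.1.1 hw, hreach w hw⟩,
      fun r a b h => ⟨hC.1.2 r a b h, hreach a (C.memL r a b h)⟩⟩
  exact hsub.antisymm (hC.2.2 _ (Γ.isComponent_compOf v _).1 (Γ.isComponent_compOf v _).2.1 hsub)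

lemma IsComponent.eq_of_mem {C' : CGraph V s} (hC : C.IsComponent Γ) (hC' : C'.IsComponent Γ)
    {v : V} (hv : v ∈ C.verts) (hv' : v ∈ C'.verts) : C = C' := by
  rw [hC.eq_compOf hv, hC'.eq_compOf hv']

lemma IsComponent.edge_mem (hC : C.IsComponent Γ) {r : Fin s} {a b : V} (h : Γ.E r a b)
    (hab : a ∈ C.verts ∨ b ∈ C.verts) : C.E r a b := by
  obtain ⟨v, hv⟩ := C.nonem
  rw [hC.eq_compOf hv] at hab ⊢
  exact compOf_edge h hab

lemma IsComponent.mem_of_adj (hC : C.IsComponent Γ) {a b : V} (ha : a ∈ C.verts)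
    (hab : Γ.Adj a b) : b ∈ C.verts := by
  obtain ⟨r, h | h⟩ := hab
  · exact C.memR _ _ _ (hC.edge_mem h (.inl ha))
  · exact C.memL _ _ _ (hC.edge_mem h (.inr ha))

lemma IsComponent.subgraph_of_connected (hC : C.IsComponent Γ) (hQ : Q.Subgraph Γ)
    (hconn : Q.Connected) {v : V} (hvQ : v ∈ Q.verts) (hvC : v ∈ C.verts) : Q.Subgraph C := by
  have hverts : Q.verts ⊆ C.verts := fun w hw =>
    mem_of_reflTransGen (fun _ _ => hC.mem_of_adj) hvC (hQ.reflTransGen_adj (hconn v hvQ w hw))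
  exact ⟨hverts, fun r a b h => hC.edge_mem (hQ.2 r a b h) (.inl (hverts (Q.memL r a b h)))⟩

lemma IsComponent.subgraph_of_erase {P : CGraph V s} (hC : C.IsComponent (Γ.erase P)) :
    C.Subgraph Γ :=
  hC.1.trans (Γ.erase_subgraph P)

lemma exists_isComponent_mem (Γ : CGraph V s) {v : V} (hv : v ∈ Γ.verts) :
    ∃ C : CGraph V s, C.IsComponent Γ ∧ v ∈ C.verts :=
  ⟨Γ.compOf v hv, Γ.isComponent_compOf v hv, hv, .refl⟩

def components (Γ : CGraph V s) : Set (CGraph V s) := {C | C.IsComponent Γ}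

lemma finite_components (Γ : CGraph V s) : Γ.components.Finite :=
  Γ.finite_setOf_subgraph.subset fun _ hC => hC.1

def componentFinset (Γ : CGraph V s) : Finset (CGraph V s) := Γ.finite_components.toFinset

@[simp]
lemma mem_componentFinset : C ∈ Γ.componentFinset ↔ C.IsComponent Γ :=
  Set.Finite.mem_toFinset _

lemma ncard_biUnion_components {α : Type*} {f : CGraph V s → Set α} (g : α → V)
    (hg : ∀ C ∈ Γ.components, ∀ x ∈ f C, g x ∈ C.verts)
    (hfin : ∀ C ∈ Γ.components, (f C).Finite) :
    (⋃ C ∈ Γ.components, f C).ncard = ∑ C ∈ Γ.componentFinset, (f C).ncard := by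
  have hdisj : Γ.components.PairwiseDisjoint f := fun C hC C' hC' hne =>
    Set.disjoint_left.mpr fun x hx hx' => hne (IsComponent.eq_of_mem hC hC' (hg C hC x hx)
      (hg C' hC' x hx'))
  rw [Γ.finite_components.ncard_biUnion hfin hdisj, finsum_mem_eq_finite_toFinset_sum]
  rfl

lemma ncard_eq_sum_components {S : Set V} (hS : S ⊆ Γ.verts) :
    S.ncard = ∑ C ∈ Γ.componentFinset, (C.verts ∩ S).ncard := by
  rw [← ncard_biUnion_components id (fun _ _ _ hx => hx.1)
    fun _ _ => Γ.finite.subset fun _ hx => hS hx.2]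
  congr 1
  ext x
  simp only [Set.mem_iUnion, Set.mem_inter_iff, exists_and_left, exists_prop]
  refine ⟨fun hx => ?_, fun ⟨_, _, _, hx⟩ => hx⟩
  obtain ⟨C, hC, hxC⟩ := Γ.exists_isComponent_mem (hS hx)
  exact ⟨C, hxC, hC, hx⟩

lemma vertCount_eq_sum_components (Γ : CGraph V s) :
    Γ.vertCount = ∑ C ∈ Γ.componentFinset, C.vertCount := by
  rw [vertCount_eq_ncard, ncard_eq_sum_components subset_rfl]
  refine Finset.sum_congr rfl fun C hC => ?_
  rw [vertCount_eq_ncard, Set.inter_eq_left.mpr (mem_componentFinset.mp hC).1.1]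

lemma edgeCount_eq_sum_components (Γ : CGraph V s) :
    Γ.edgeCount = ∑ C ∈ Γ.componentFinset, C.edgeCount := by
  have hcover : Γ.edgeSet = ⋃ C ∈ Γ.components, C.edgeSet := by
    ext p
    simp only [Set.mem_iUnion, exists_prop]
    refine ⟨fun hp => ?_, fun ⟨C, hC, hp⟩ => hC.1.2 _ _ _ hp⟩
    obtain ⟨C, hC, haC⟩ := Γ.exists_isComponent_mem (Γ.memL _ _ _ hp)
    exact ⟨C, hC, hC.edge_mem hp (.inl haC)⟩
  simp only [edgeCount_eq_ncard, hcover]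
  exact ncard_biUnion_components (fun p => p.2.1) (fun C _ p hp => C.memL _ _ _ hp)
    fun C _ => C.finite_edgeSet

end Components

section Monochromatic

variable {Δ : CGraph V s} {r : Fin s}

lemma edgeCount_eq_ncard_sources (hadm : Δ.Admissible) (hmono : ∀ r' a b, Δ.E r' a b → r' = r) :
    Δ.edgeCount = {a | ∃ r b, Δ.E r a b}.ncard := by
  have himage : {a | ∃ r b, Δ.E r a b} = (fun p => p.2.1) '' Δ.edgeSet := by
    ext a
    simp [edgeSet]
  rw [edgeCount_eq_ncard, himage, Set.InjOn.ncard_image]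
  rintro ⟨r₁, a, b₁⟩ h₁ ⟨r₂, a', b₂⟩ h₂ (rfl : a = a')
  obtain rfl := (hmono _ _ _ h₁).trans (hmono _ _ _ h₂).symm
  rw [hadm.1 r₁ a b₁ b₂ h₁ h₂]

lemma edgeCount_eq_ncard_targets (hadm : Δ.Admissible) (hmono : ∀ r' a b, Δ.E r' a b → r' = r) :
    Δ.edgeCount = {b | ∃ r a, Δ.E r a b}.ncard := by
  have himage : {b | ∃ r a, Δ.E r a b} = (fun p => p.2.2) '' Δ.edgeSet := by
    ext b
    simp [edgeSet]
  rw [edgeCount_eq_ncard, himage, Set.InjOn.ncard_image]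
  rintro ⟨r₁, a₁, b⟩ h₁ ⟨r₂, a₂, b'⟩ h₂ (rfl : b = b')
  obtain rfl := (hmono _ _ _ h₁).trans (hmono _ _ _ h₂).symm
  rw [hadm.2 r₁ a₁ a₂ b h₁ h₂]

lemma edgeCount_eq_vertCount_of_closed (hadm : Δ.Admissible)
    (hmono : ∀ r' a b, Δ.E r' a b → r' = r) (hcl : Δ.Closed) : Δ.edgeCount = Δ.vertCount := by
  rw [edgeCount_eq_ncard_sources hadm hmono, vertCount_eq_ncard]
  congr 1
  exact Set.Subset.antisymm (fun a ⟨r, b, h⟩ => Δ.memL r a b h) hcl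

lemma edgeCount_lt_vertCount_of_not_closed (hadm : Δ.Admissible)
    (hmono : ∀ r' a b, Δ.E r' a b → r' = r) (hcl : ¬ Δ.Closed) : Δ.edgeCount < Δ.vertCount := by
  rw [edgeCount_eq_ncard_sources hadm hmono, vertCount_eq_ncard]
  exact Set.ncard_lt_ncard ⟨fun a ⟨r, b, h⟩ => Δ.memL r a b h, hcl⟩ Δ.finite

lemma Closed.exists_edge_into (hadm : Δ.Admissible) (hmono : ∀ r' a b, Δ.E r' a b → r' = r)
    (hcl : Δ.Closed) {v : V} (hv : v ∈ Δ.verts) : ∃ r u, Δ.E r u v := by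
  have hsub : {b | ∃ r a, Δ.E r a b} ⊆ Δ.verts := fun b ⟨r, a, h⟩ => Δ.memR r a b h
  have hcard : Δ.verts.ncard ≤ {b | ∃ r a, Δ.E r a b}.ncard := by
    rw [← edgeCount_eq_ncard_targets hadm hmono, ← vertCount_eq_ncard,
      edgeCount_eq_vertCount_of_closed hadm hmono hcl]
  rw [← Set.eq_of_subset_of_ncard_le hsub hcard Δ.finite] at hv
  exact hv

end Monochromatic

def toSimpleGraph (Γ : CGraph V s) : SimpleGraph Γ.verts := SimpleGraph.fromRel fun a b => Γ.Adj a b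

lemma Connected.toSimpleGraph {Γ : CGraph V s} (h : Γ.Connected) : Γ.toSimpleGraph.Connected := by
  have hreach : ∀ a (ha : a ∈ Γ.verts) b, Relation.ReflTransGen Γ.Adj a b →
      ∃ hb : b ∈ Γ.verts, Γ.toSimpleGraph.Reachable ⟨a, ha⟩ ⟨b, hb⟩ := by
    intro a ha b hab
    induction hab with
    | refl => exact ⟨ha, .rfl⟩
    | @tail c d _ hcd ih =>
      obtain ⟨hc, hac⟩ := ih
      refine ⟨hcd.mem_right, hac.trans ?_⟩
      by_cases hne : c = d
      · subst hne
        rfl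
      · exact SimpleGraph.Adj.reachable ⟨by simpa using hne, .inl hcd⟩
  have : Nonempty Γ.verts := Γ.nonem.to_subtype
  exact ⟨fun ⟨a, ha⟩ ⟨b, hb⟩ => (hreach a ha b (h a ha b hb)).2⟩

lemma card_edgeSet_toSimpleGraph_le (Γ : CGraph V s) :
    Nat.card Γ.toSimpleGraph.edgeSet ≤ Γ.edgeCount := by
  have hlift : ∀ e : Γ.toSimpleGraph.edgeSet,
      ∃ p : Γ.edgeSet, s(p.1.2.1, p.1.2.2) = e.1.map Subtype.val := by
    rintro ⟨e, he⟩
    induction e using Sym2.ind with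
    | _ x y =>
      obtain ⟨-, ⟨r, h | h⟩ | ⟨r, h | h⟩⟩ := he
      · exact ⟨⟨(r, x, y), h⟩, rfl⟩
      · exact ⟨⟨(r, y, x), h⟩, Sym2.eq_swap⟩
      · exact ⟨⟨(r, y, x), h⟩, Sym2.eq_swap⟩
      · exact ⟨⟨(r, x, y), h⟩, rfl⟩
  choose f hf using hlift
  have : Finite Γ.edgeSet := Γ.finite_edgeSet.to_subtype
  rw [edgeCount_eq_ncard, ← Nat.card_coe_set_eq]
  refine Nat.card_le_card_of_injective f fun e e' hee' => Subtype.ext ?_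
  apply Sym2.map.injective Subtype.val_injective
  rw [← hf e, ← hf e', hee']

lemma Connected.vertCount_le_edgeCount_add_one {Γ : CGraph V s} (h : Γ.Connected) :
    Γ.vertCount ≤ Γ.edgeCount + 1 :=
  h.toSimpleGraph.card_vert_le_card_edgeSet_add_one.trans
    (Nat.add_le_add_right Γ.card_edgeSet_toSimpleGraph_le 1)

section Paths

variable {Γ P Q C : CGraph V s} {r : Fin s}

lemma IsPathOf.subgraph (hP : P.IsPathOf Γ) : P.Subgraph Γ := by
  obtain ⟨r, hPc, -⟩ := hP
  exact hPc.1.trans (Γ.mono_subgraph r)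

open Classical in
lemma IsRPath.edgeCount_add_one (hadm : Γ.Admissible) (hP : P.IsRPath Γ r) :
    P.edgeCount + 1 = P.vertCount + if P.Closed then 1 else 0 := by
  have hPadm := admissible_of_le hadm (IsPathOf.subgraph ⟨r, hP⟩).2
  have hmono : ∀ r' a b, P.E r' a b → r' = r := fun r' a b h => (hP.1.1.2 r' a b h).1
  have hle := hP.1.2.1.vertCount_le_edgeCount_add_one
  split_ifs with hcl
  · rw [edgeCount_eq_vertCount_of_closed hPadm hmono hcl]
  · have := edgeCount_lt_vertCount_of_not_closed hPadm hmono hcl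
    omega

lemma exists_isRPath_of_not_trivial (h : ¬ Γ.Trivial) :
    ∃ (P : CGraph V s) (r : Fin s), P.IsRPath Γ r := by
  obtain ⟨r, a, b, hab⟩ : ∃ r a b, Γ.E r a b := by simpa [Trivial] using h
  have ha : a ∈ (Γ.mono r).verts := Γ.memL r a b hab
  have hC := (Γ.mono r).isComponent_compOf a ha
  exact ⟨_, r, hC, fun htriv => htriv r a b (hC.edge_mem ⟨rfl, hab⟩ (.inl ⟨ha, .refl⟩))⟩

/-- A closed `Q` has an incoming and an outgoing edge at every vertex, so by admissibility every
`r`-edge of `Γ` touching `Q` is already an edge of `Q`. -/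
lemma Closed.isComponent_mono (hadm : Γ.Admissible) (hQ : Q.Subgraph (Γ.mono r))
    (hconn : Q.Connected) (hcl : Q.Closed) : Q.IsComponent (Γ.mono r) := by
  have hQadm := admissible_of_le hadm fun r' a b h => (hQ.2 r' a b h).2
  have hmono : ∀ r' a b, Q.E r' a b → r' = r := fun r' a b h => (hQ.2 r' a b h).1
  refine isComponent_of_forall_edge hQ hconn ?_
  rintro r' a b ⟨rfl, h⟩ (ha | hb)
  · obtain ⟨r'', b', h'⟩ := hcl a ha
    obtain ⟨rfl, h'Γ⟩ := hQ.2 _ _ _ h'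
    rwa [hadm.1 _ a b b' h h'Γ]
  · obtain ⟨r'', a', h'⟩ := hcl.exists_edge_into hQadm hmono hb
    obtain ⟨rfl, h'Γ⟩ := hQ.2 _ _ _ h'
    rwa [hadm.2 _ a a' b h h'Γ]

def loopSet (Γ : CGraph V s) : Set (CGraph V s) := {Q | Q.IsLoopOf Γ}

lemma loopCount_eq_ncard (Γ : CGraph V s) : Γ.loopCount = Γ.loopSet.ncard :=
  Nat.card_coe_set_eq _

lemma finite_loopSet (Γ : CGraph V s) : Γ.loopSet.Finite :=
  Γ.finite_setOf_subgraph.subset fun _ hQ => hQ.1.subgraph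

lemma IsLoopOf.of_subgraph (hadm : Γ.Admissible) (hC : C.Subgraph Γ) (hQ : Q.IsLoopOf C) :
    Q.IsLoopOf Γ := by
  obtain ⟨⟨r, hQc, hnt⟩, hcl⟩ := hQ
  have hQΓ : Q.Subgraph (Γ.mono r) :=
    hQc.1.trans ⟨hC.1, fun _ _ _ h => ⟨h.1, hC.2 _ _ _ h.2⟩⟩
  exact ⟨⟨r, hcl.isComponent_mono hadm hQΓ hQc.2.1, hnt⟩, hcl⟩

lemma IsLoopOf.exists_isComponent_erase (hadm : Γ.Admissible) (hP : P.IsPathOf Γ)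
    (hQ : Q.IsLoopOf Γ) (hne : Q ≠ P) :
    ∃ C : CGraph V s, C.IsComponent (Γ.erase P) ∧ Q.IsLoopOf C := by
  obtain ⟨⟨r, hQc, hnt⟩, hcl⟩ := hQ
  obtain ⟨r₀, hPc, -⟩ := hP
  have hQΓ : Q.Subgraph (Γ.erase P) := by
    refine ⟨hQc.1.1, fun r' a b h => ⟨(hQc.1.2 _ _ _ h).2, fun hPE => hne ?_⟩⟩
    obtain rfl : r = r₀ := (hQc.1.2 _ _ _ h).1.symm.trans (hPc.1.2 _ _ _ hPE).1
    exact hQc.eq_of_mem hPc (Q.memL _ _ _ h) (P.memL _ _ _ hPE)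
  obtain ⟨q, hq⟩ := Q.nonem
  obtain ⟨C, hC, hqC⟩ := (Γ.erase P).exists_isComponent_mem (hQΓ.1 hq)
  have hQC := hC.subgraph_of_connected hQΓ hQc.2.1 hq hqC
  have hCadm := admissible_of_le hadm hC.subgraph_of_erase.2
  have hQCr : Q.Subgraph (C.mono r) :=
    ⟨hQC.1, fun r' a b h => ⟨(hQc.1.2 _ _ _ h).1, hQC.2 _ _ _ h⟩⟩
  exact ⟨C, hC, ⟨r, hcl.isComponent_mono hCadm hQCr hQc.2.1, hnt⟩, hcl⟩

lemma IsPathOf.ne_of_subgraph_erase (hQ : Q.IsPathOf C) (hC : C.Subgraph (Γ.erase P)) :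
    Q ≠ P := by
  rintro rfl
  obtain ⟨r, hQc, hnt⟩ := hQ
  obtain ⟨r', a, b, h⟩ : ∃ r a b, Q.E r a b := by simpa [Trivial] using hnt
  exact (hC.2 _ _ _ (hQc.1.2 _ _ _ h).2).2 h

lemma loopSet_diff_singleton (hadm : Γ.Admissible) (hP : P.IsPathOf Γ) :
    Γ.loopSet \ {P} = ⋃ C ∈ (Γ.erase P).components, C.loopSet := by
  ext Q
  simp only [Set.mem_sdiff, Set.mem_singleton_iff, Set.mem_iUnion, exists_prop]
  constructor
  · rintro ⟨hQ, hne⟩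
    exact hQ.exists_isComponent_erase hadm hP hne
  · rintro ⟨C, hC, hQ⟩
    exact ⟨hQ.of_subgraph hadm hC.subgraph_of_erase,
      hQ.1.ne_of_subgraph_erase hC.1⟩

open Classical in
lemma loopCount_eq_sum_components_erase (hadm : Γ.Admissible) (hP : P.IsPathOf Γ) :
    Γ.loopCount =
      (∑ C ∈ (Γ.erase P).componentFinset, C.loopCount) + if P.Closed then 1 else 0 := by
  have hsum : (Γ.loopSet \ {P}).ncard = ∑ C ∈ (Γ.erase P).componentFinset, C.loopCount := by
    rw [loopSet_diff_singleton hadm hP,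
      ncard_biUnion_components (fun Q => Q.nonem.some)
        (fun _ _ Q hQ => hQ.1.subgraph.1 Q.nonem.some_mem) fun C _ => C.finite_loopSet]
    simp only [loopCount_eq_ncard]
  rw [loopCount_eq_ncard, ← hsum]
  split_ifs with hcl
  · exact (Set.ncard_sdiff_singleton_add_one (s := Γ.loopSet) ⟨hP, hcl⟩ Γ.finite_loopSet).symm
  · rw [Set.sdiff_singleton_eq_self fun h => hcl h.2, add_zero]

end Paths

section Chi

variable {Γ P C : CGraph V s} {r : Fin s}

lemma Trivial.chi_eq_one (htriv : Γ.Trivial) (hconn : Γ.Connected) : Γ.chi = 1 := by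
  obtain ⟨v, hv⟩ := Γ.nonem
  have hV : Γ.vertCount = 1 := by
    rw [vertCount_eq_ncard, Set.ncard_eq_one]
    exact ⟨v, Set.eq_singleton_iff_unique_mem.mpr
      ⟨hv, fun w hw => htriv.reflTransGen_adj (hconn w hw v hv)⟩⟩
  have hE : Γ.edgeCount = 0 := Nat.eq_zero_of_not_pos (mt edgeCount_pos_iff.mp (not_not.mpr htriv))
  have hL : Γ.loopCount = 0 := by
    rw [loopCount_eq_ncard, Set.ncard_eq_zero Γ.finite_loopSet, Set.eq_empty_iff_forall_notMem]
    rintro Q ⟨hQ, -⟩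
    have hsub := hQ.subgraph
    obtain ⟨r, -, hnt⟩ := hQ
    exact hnt fun r' a b h => htriv r' a b (hsub.2 r' a b h)
  simp [chi, hV, hE, hL]

lemma edgeCount_erase_add (hP : ∀ r a b, P.E r a b → Γ.E r a b) :
    (Γ.erase P).edgeCount + P.edgeCount = Γ.edgeCount := by
  have hunion : (Γ.erase P).edgeSet ∪ P.edgeSet = Γ.edgeSet := by
    ext p
    simp only [edgeSet, erase, Set.mem_union, Set.mem_ofPred_eq]
    have := hP p.1 p.2.1 p.2.2
    tauto
  have hdisj : Disjoint (Γ.erase P).edgeSet P.edgeSet :=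
    Set.disjoint_left.mpr fun _ hp => hp.2
  simp only [edgeCount_eq_ncard]
  rw [← Set.ncard_union_eq hdisj (Γ.erase P).finite_edgeSet P.finite_edgeSet, hunion]

lemma edgeCount_lt_of_isComponent_erase (hP : P.IsPathOf Γ) (hC : C.IsComponent (Γ.erase P)) :
    C.edgeCount < Γ.edgeCount := by
  have hsplit := edgeCount_erase_add hP.subgraph.2
  have hPpos : 0 < P.edgeCount := by
    obtain ⟨r, -, hnt⟩ := hP
    exact edgeCount_pos_iff.mpr hnt
  have := edgeCount_le_of_le hC.1.2
  omega

lemma IsComponent.inter_verts_nonempty (hconn : Γ.Connected) (hP : P.verts ⊆ Γ.verts)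
    (hC : C.IsComponent (Γ.erase P)) : (C.verts ∩ P.verts).Nonempty := by
  by_contra hdisj
  rw [Set.not_nonempty_iff_eq_empty, ← Set.disjoint_iff_inter_eq_empty] at hdisj
  have hstep : ∀ a b, a ∈ C.verts → Γ.Adj a b → b ∈ C.verts := by
    rintro a b ha ⟨r, h | h⟩
    · exact hC.mem_of_adj ha
        ⟨r, .inl ⟨h, fun hPE => hdisj.notMem_of_mem_left ha (P.memL _ _ _ hPE)⟩⟩
    · exact hC.mem_of_adj ha
        ⟨r, .inr ⟨h, fun hPE => hdisj.notMem_of_mem_left ha (P.memR _ _ _ hPE)⟩⟩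
  obtain ⟨c, hc⟩ := C.nonem
  obtain ⟨p, hp⟩ := P.nonem
  exact hdisj.notMem_of_mem_left (mem_of_reflTransGen hstep hc (hconn c (hC.1.1 hc) p (hP hp))) hp

lemma IsRPath.chi_eq_one_add_sum (hadm : Γ.Admissible) (hP : P.IsRPath Γ r) :
    Γ.chi = 1 + ∑ C ∈ (Γ.erase P).componentFinset,
      (C.chi - ((C.verts ∩ P.verts).ncard : ℤ)) := by
  have hV := (Γ.erase P).vertCount_eq_sum_components
  have hVP : P.vertCount = ∑ C ∈ (Γ.erase P).componentFinset, (C.verts ∩ P.verts).ncard := by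
    rw [vertCount_eq_ncard]
    exact ncard_eq_sum_components hP.1.1.1
  have hE := edgeCount_erase_add (IsPathOf.subgraph ⟨r, hP⟩).2
  rw [(Γ.erase P).edgeCount_eq_sum_components] at hE
  have hEP := hP.edgeCount_add_one hadm
  have hL := loopCount_eq_sum_components_erase hadm ⟨r, hP⟩
  simp only [chi, Finset.sum_sub_distrib, Finset.sum_add_distrib, ← Nat.cast_sum]
  change Γ.vertCount = _ at hV
  split_ifs at hEP hL <;> omega

def AttachesSimply (Γ P : CGraph V s) : Prop :=
  ∀ C : CGraph V s, C.IsComponent (Γ.erase P) → Nat.card ↥(C.verts ∩ P.verts) = 1 ∧ C.chi = 1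

lemma IsRPath.chi_le_one_and_iff (hconn : Γ.Connected) (hadm : Γ.Admissible)
    (hP : P.IsRPath Γ r) (hchi : ∀ C : CGraph V s, C.IsComponent (Γ.erase P) → C.chi ≤ 1) :
    Γ.chi ≤ 1 ∧ (Γ.chi = 1 ↔ Γ.AttachesSimply P) := by
  have hmeet : ∀ C : CGraph V s, C.IsComponent (Γ.erase P) → 1 ≤ (C.verts ∩ P.verts).ncard :=
    fun C hC => (Set.ncard_pos (P.finite.subset Set.inter_subset_right)).mpr
      (hC.inter_verts_nonempty hconn hP.1.1.1)
  have hterm : ∀ C ∈ (Γ.erase P).componentFinset,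
      C.chi - ((C.verts ∩ P.verts).ncard : ℤ) ≤ 0 := fun C hC => by
    have := hchi C (mem_componentFinset.mp hC)
    have := hmeet C (mem_componentFinset.mp hC)
    omega
  rw [hP.chi_eq_one_add_sum hadm]
  refine ⟨by linarith [Finset.sum_nonpos hterm], ?_⟩
  rw [add_eq_left, Finset.sum_eq_zero_iff_of_nonpos hterm]
  simp only [mem_componentFinset, AttachesSimply, Nat.card_coe_set_eq]
  refine forall_congr' fun C => forall_congr' fun hC => ?_
  have := hchi C hC
  have := hmeet C hC
  constructor <;> intro <;> omega

lemma Connected.chi_le_one (hconn : Γ.Connected) (hadm : Γ.Admissible) : Γ.chi ≤ 1 := by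
  induction hn : Γ.edgeCount using Nat.strong_induction_on generalizing Γ with
  | _ n ih =>
    by_cases htriv : Γ.Trivial
    · exact (htriv.chi_eq_one hconn).le
    obtain ⟨P, r, hP⟩ := exists_isRPath_of_not_trivial htriv
    refine (hP.chi_le_one_and_iff hconn hadm fun C hC => ?_).1
    exact ih _ (hn ▸ edgeCount_lt_of_isComponent_erase ⟨r, hP⟩ hC) hC.2.1
      (admissible_of_le hadm hC.subgraph_of_erase.2) rfl

end Chi

end CGraph

theorem chi_le_one_of_connected_admissible_general {V : Type} {s : ℕ}
    (Γ : CGraph V s) (hconn : Γ.Connected) (hadm : Γ.Admissible) :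
    Γ.chi ≤ 1 ∧
    (Γ.chi = 1 ↔ ∀ P : CGraph V s, P.IsPathOf Γ →
      ∀ C : CGraph V s, C.IsComponent (Γ.erase P) →
        Nat.card ↥(C.verts ∩ P.verts) = 1 ∧ C.chi = 1) ∧
    ((∃ P : CGraph V s, P.IsPathOf Γ ∧
      ∀ C : CGraph V s, C.IsComponent (Γ.erase P) →
        Nat.card ↥(C.verts ∩ P.verts) = 1 ∧ C.chi = 1) → Γ.chi = 1) := by
  have hpath : ∀ P : CGraph V s, P.IsPathOf Γ → (Γ.chi = 1 ↔ Γ.AttachesSimply P) :=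
    fun P ⟨r, hP⟩ => (hP.chi_le_one_and_iff hconn hadm fun _ hC => hC.2.1.chi_le_one
      (CGraph.admissible_of_le hadm hC.subgraph_of_erase.2)).2
  refine ⟨hconn.chi_le_one hadm, ⟨fun h P hP => (hpath P hP).1 h, fun hall => ?_⟩,
    fun ⟨P, hP, hattach⟩ => (hpath P hP).2 hattach⟩
  by_cases htriv : Γ.Trivial
  · exact htriv.chi_eq_one hconn
  · obtain ⟨P, r, hP⟩ := CGraph.exists_isRPath_of_not_trivial htriv
    exact (hpath P ⟨r, hP⟩).2 (hall P ⟨r, hP⟩)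

/-- If `Γ` is a connected admissible graph then `χ(Γ) ≤ 1`; moreover `χ(Γ) = 1`
iff every path `P` of `Γ` has the property that every connected component `C` of
`Γ ∖ P` has exactly one vertex in common with `P` and satisfies `χ(C) = 1`; and if
some single path of `Γ` has this property, then already `χ(Γ) = 1`. -/
theorem chi_le_one_of_connected_admissible {V : Type} {s : ℕ} (hs : 0 < s)
    (Γ : CGraph V s) (hconn : Γ.Connected) (hadm : Γ.Admissible) :
    Γ.chi ≤ 1 ∧
    (Γ.chi = 1 ↔ ∀ P : CGraph V s, P.IsPathOf Γ →
      ∀ C : CGraph V s, C.IsComponent (Γ.erase P) →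
        Nat.card ↥(C.verts ∩ P.verts) = 1 ∧ C.chi = 1) ∧
    ((∃ P : CGraph V s, P.IsPathOf Γ ∧
      ∀ C : CGraph V s, C.IsComponent (Γ.erase P) →
        Nat.card ↥(C.verts ∩ P.verts) = 1 ∧ C.chi = 1) → Γ.chi = 1) :=
  chi_le_one_of_connected_admissible_general Γ hconn hadm
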